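/- arXiv:1611.07275 — 5 statements merged into one kernel-verified Lean document; each statement's English description precedes it below -/
import Mathlib

section
/- The probability that ρ_n equals the identity permutation of {1,…,n} is 2^n/(n+1)!. -/
/-!
Almost surely `ρ` is the identity exactly when `Z 0 < Z 1 < ⋯ < Z (n-1)`. By independence the
joint law of the `Z i` is the product of the laws with densities `(i+1) s^i` on `(0,1)`, and
conditioning on the last coordinate gives the recursion
`P(Z 0 < ⋯ < Z k < t) = ∫₀ᵗ P(Z 0 < ⋯ < Z (k-1) < s) (k+1) s^k ds`,
whose solution is `2^(k+1)/(k+2)! · t^((k+1)(k+2)/2)`.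
-/

open MeasureTheory ProbabilityTheory Filter
open scoped ENNReal NNReal Topology

/-- The hypotheses defining an inverse-unfair permutation `ρ` on a probability
space `(Ω, μ)`: `Z i` is (distributed as) the maximum of `i+1` i.i.d. uniform
random variables on `(0,1)` (players are indexed by `Fin n`, player `i : Fin n`
drawing `(i : ℕ) + 1` numbers), the `Z i` are independent, and almost surely
`ρ ω` is the rank permutation of `(Z 0 ω, …, Z (n-1) ω)`. -/
structure IsInverseUnfair {n : ℕ} {Ω : Type*} [MeasurableSpace Ω]
    (μ : Measure Ω) (Z : Fin n → Ω → ℝ) (ρ : Ω → Equiv.Perm (Fin n)) : Prop where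
  prob : IsProbabilityMeasure μ
  meas : ∀ i, Measurable (Z i)
  indep : iIndepFun Z μ
  cdf : ∀ i : Fin n, ∀ t ∈ Set.Icc (0 : ℝ) 1,
      μ {ω | Z i ω ≤ t} = ENNReal.ofReal (t ^ ((i : ℕ) + 1))
  rhoMeas : ∀ σ : Equiv.Perm (Fin n), MeasurableSet {ω | ρ ω = σ}
  rank : ∀ᵐ ω ∂μ, ∀ i j : Fin n, (ρ ω i < ρ ω j ↔ Z i ω < Z j ω)

open Set

theorem perm_eq_one_iff_strictMono {α β : Type*} [LinearOrder α] [Finite α] [Preorder β]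
    {σ : Equiv.Perm α} {x : α → β} (h : ∀ i j, σ i < σ j ↔ x i < x j) :
    σ = 1 ↔ StrictMono x := by
  constructor
  · rintro rfl i j hij
    exact (h i j).1 hij
  · intro hx
    have hσ : StrictMono σ := fun i j hij => (h i j).2 (hx hij)
    exact Equiv.ext fun i => hσ.apply_eq

theorem MeasureTheory.Measure.eq_of_Iic_eq_on_Icc {μ ν : Measure ℝ} [IsProbabilityMeasure μ]
    [IsProbabilityMeasure ν] {a b : ℝ} (hab : a ≤ b)
    (h : ∀ t ∈ Icc a b, μ (Iic t) = ν (Iic t)) (ha : μ (Iic a) = 0) (hb : μ (Iic b) = 1) :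
    μ = ν := by
  have ha' : ν (Iic a) = 0 := h a ⟨le_rfl, hab⟩ ▸ ha
  have hb' : ν (Iic b) = 1 := h b ⟨hab, le_rfl⟩ ▸ hb
  refine Measure.ext_of_Iic μ ν fun t => ?_
  rcases lt_or_ge t a with hta | hat
  · rw [measure_mono_null (Iic_subset_Iic.2 hta.le) ha,
      measure_mono_null (Iic_subset_Iic.2 hta.le) ha']
  rcases le_or_gt t b with htb | hbt
  · exact h t ⟨hat, htb⟩
  · rw [(prob_le_one).antisymm (hb ▸ measure_mono (Iic_subset_Iic.2 hbt.le)),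
      (prob_le_one).antisymm (hb' ▸ measure_mono (Iic_subset_Iic.2 hbt.le))]

section StrictMonoTuples

variable {α : Type*} [LinearOrder α] [MeasurableSpace α]

def strictMonoBelow (k : ℕ) (t : α) : Set (Fin k → α) := {x | StrictMono x ∧ ∀ i, x i < t}

theorem pi_strictMono_eq_strictMonoBelow {k : ℕ} (ν : Fin k → Measure α)
    [∀ i, SigmaFinite (ν i)] {t : α} (h : ∀ i, ∀ᵐ s ∂ν i, s < t) :
    Measure.pi ν {x | StrictMono x} = Measure.pi ν (strictMonoBelow k t) := by
  refine measure_congr (eventuallyEq_set.2 ?_)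
  filter_upwards [eventually_all.2 fun i => Measure.tendsto_eval_ae_ae.eventually (h i)]
    with x hx
  simp [strictMonoBelow, hx]

variable [TopologicalSpace α] [OrderClosedTopology α] [SecondCountableTopology α]
  [OpensMeasurableSpace α]

theorem measurableSet_strictMono (k : ℕ) : MeasurableSet {x : Fin k → α | StrictMono x} := by
  have : {x : Fin k → α | StrictMono x} = ⋂ i, ⋂ j, ⋂ (_ : i < j), {x | x i < x j} := by
    ext x; simp [StrictMono]
  rw [this]
  exact .iInter fun i => .iInter fun j => .iInter fun _ =>
    measurableSet_lt (measurable_pi_apply i) (measurable_pi_apply j)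

theorem pi_strictMonoBelow_succ {k : ℕ} (ν : Fin (k + 1) → Measure α)
    [∀ i, SigmaFinite (ν i)] (t : α) :
    Measure.pi ν (strictMonoBelow (k + 1) t)
      = ∫⁻ s in Iio t, Measure.pi (fun i => ν i.castSucc) (strictMonoBelow k s)
          ∂ν (Fin.last k) := by
  set T : Set (α × (Fin k → α)) := {p | p.1 < t ∧ p.2 ∈ strictMonoBelow k p.1}
  have hT : MeasurableSet T := by
    have : T = {p | p.1 < t} ∩
        (Prod.snd ⁻¹' {y | StrictMono y} ∩ ⋂ i, {p | p.2 i < p.1}) := by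
      ext p; simp [T, strictMonoBelow]
    rw [this]
    exact (measurableSet_lt measurable_fst measurable_const).inter
      (((measurableSet_strictMono k).preimage measurable_snd).inter
        (.iInter fun i => measurableSet_lt (by fun_prop) measurable_fst))
  have hpre : (MeasurableEquiv.piFinSuccAbove (fun _ => α) (Fin.last k)).symm ⁻¹'
      strictMonoBelow (k + 1) t = T := by
    ext ⟨s, y⟩
    change Fin.insertNth (Fin.last k) s y ∈ strictMonoBelow (k + 1) t ↔ _
    simp only [T, strictMonoBelow, mem_ofPred_eq, Fin.strictMono_insertNth_iff,
      Fin.forall_iff_succAbove (Fin.last k), Fin.insertNth_apply_same,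
      Fin.insertNth_apply_succAbove, Fin.castSucc_lt_last, forall_const, Fin.last_le_iff,
      Fin.castSucc_ne_last, IsEmpty.forall_iff, implies_true, and_true]
    exact ⟨fun ⟨⟨hy, hys⟩, hst, _⟩ => ⟨hst, hy, hys⟩,
      fun ⟨hst, hy, hys⟩ => ⟨⟨hy, hys⟩, hst, fun i => (hys i).trans hst⟩⟩
  rw [← (measurePreserving_piFinSuccAbove ν (Fin.last k)).symm.measure_preimage_equiv, hpre,
    Measure.prod_apply hT, ← lintegral_indicator measurableSet_Iio, Fin.succAbove_last]
  refine lintegral_congr fun s => ?_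
  by_cases hs : s < t <;> simp [T, hs]

end StrictMonoTuples

/-- The law of the maximum of `i + 1` independent uniforms on `(0, 1)`. -/
noncomputable def powLaw (i : ℕ) : Measure ℝ :=
  (volume.restrict (Ioo 0 1)).withDensity fun s => ENNReal.ofReal ((i + 1) * s ^ i)

theorem powLaw_absolutelyContinuous (i : ℕ) : powLaw i ≪ volume.restrict (Ioo 0 1) :=
  withDensity_absolutelyContinuous _ _

theorem ae_mem_Ioo_powLaw (i : ℕ) : ∀ᵐ s ∂powLaw i, s ∈ Ioo (0 : ℝ) 1 :=
  (powLaw_absolutelyContinuous i).ae_le (ae_restrict_mem measurableSet_Ioo)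

theorem setLIntegral_Iio_pow_powLaw (i m : ℕ) {t : ℝ} (ht0 : 0 ≤ t) (ht1 : t ≤ 1) :
    ∫⁻ s in Iio t, ENNReal.ofReal (s ^ m) ∂powLaw i
      = ENNReal.ofReal ((i + 1) / (m + i + 1) * t ^ (m + i + 1)) := by
  rw [powLaw, setLIntegral_withDensity_eq_setLIntegral_mul _ (by fun_prop) (by fun_prop)
    measurableSet_Iio, Measure.restrict_restrict measurableSet_Iio, Iio_inter_Ioo,
    min_eq_left ht1]
  calc ∫⁻ s in Ioo 0 t, ENNReal.ofReal ((i + 1) * s ^ i) * ENNReal.ofReal (s ^ m)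
      = ∫⁻ s in Ioo 0 t, ENNReal.ofReal ((i + 1) * s ^ (m + i)) := by
        refine setLIntegral_congr_fun measurableSet_Ioo fun s hs => ?_
        rw [← ENNReal.ofReal_mul (by positivity [hs.1.le]), pow_add]
        ring_nf
    _ = ENNReal.ofReal (∫ s in 0..t, (i + 1) * s ^ (m + i)) := by
        rw [intervalIntegral.integral_of_le ht0, integral_Ioc_eq_integral_Ioo,
          ofReal_integral_eq_lintegral_ofReal
            ((by fun_prop : Continuous _).integrableOn_Icc.mono_set Ioo_subset_Icc_self)
            (ae_restrict_of_forall_mem measurableSet_Ioo fun s hs => by positivity [hs.1.le])]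
    _ = _ := by
        rw [intervalIntegral.integral_const_mul, integral_pow]
        congr 1
        push_cast
        field_simp
        ring

theorem powLaw_Iic (i : ℕ) {t : ℝ} (ht0 : 0 ≤ t) (ht1 : t ≤ 1) :
    powLaw i (Iic t) = ENNReal.ofReal (t ^ (i + 1)) := by
  have hIio := setLIntegral_Iio_pow_powLaw i 0 ht0 ht1
  simp only [pow_zero, ENNReal.ofReal_one, setLIntegral_one] at hIio
  rw [← measure_congr (Iio_ae_eq_Iic' (powLaw_absolutelyContinuous i (measure_singleton t))),
    hIio, Nat.cast_zero, zero_add, zero_add, div_self (by positivity), one_mul]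

instance (i : ℕ) : IsProbabilityMeasure (powLaw i) := by
  have hIic : Iic (1 : ℝ) =ᵐ[powLaw i] univ :=
    eventuallyEq_univ.2 ((ae_mem_Ioo_powLaw i).mono fun s hs => hs.2.le)
  refine ⟨?_⟩
  rw [← measure_congr hIic, powLaw_Iic i zero_le_one le_rfl, one_pow, ENNReal.ofReal_one]

theorem map_eq_powLaw {Ω : Type*} [MeasurableSpace Ω] {μ : Measure Ω} [IsProbabilityMeasure μ]
    {X : Ω → ℝ} (hX : AEMeasurable X μ) {i : ℕ}
    (hcdf : ∀ t ∈ Icc (0 : ℝ) 1, μ {ω | X ω ≤ t} = ENNReal.ofReal (t ^ (i + 1))) :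
    μ.map X = powLaw i := by
  have hmap : ∀ t, μ.map X (Iic t) = μ {ω | X ω ≤ t} := fun t =>
    Measure.map_apply_of_aemeasurable hX measurableSet_Iic
  have := Measure.isProbabilityMeasure_map hX
  refine Measure.eq_of_Iic_eq_on_Icc zero_le_one (fun t ht => ?_) ?_ ?_
  · rw [hmap, hcdf t ht, powLaw_Iic i ht.1 ht.2]
  · simp [hmap, hcdf 0 ⟨le_rfl, zero_le_one⟩]
  · simp [hmap, hcdf 1 ⟨zero_le_one, le_rfl⟩]

open Nat in
theorem pi_powLaw_strictMonoBelow (k : ℕ) {t : ℝ} (ht0 : 0 ≤ t) (ht1 : t ≤ 1) :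
    Measure.pi (fun i : Fin k => powLaw i) (strictMonoBelow k t)
      = ENNReal.ofReal (2 ^ k / (k + 1)! * t ^ ((k + 1).choose 2)) := by
  induction k generalizing t with
  | zero => simp [strictMonoBelow, Subsingleton.strictMono]
  | succ k ih =>
    rw [pi_strictMonoBelow_succ]
    simp only [Fin.val_castSucc, Fin.val_last]
    calc ∫⁻ s in Iio t, Measure.pi (fun i : Fin k => powLaw i) (strictMonoBelow k s) ∂powLaw k
        = ∫⁻ s in Iio t, ENNReal.ofReal (2 ^ k / (k + 1)!)
            * ENNReal.ofReal (s ^ ((k + 1).choose 2)) ∂powLaw k := by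
          refine setLIntegral_congr_fun_ae measurableSet_Iio
            ((ae_mem_Ioo_powLaw k).mono fun s hs _ => ?_)
          rw [ih hs.1.le hs.2.le, ENNReal.ofReal_mul (by positivity)]
      _ = _ := by
          rw [lintegral_const_mul _ (by fun_prop), setLIntegral_Iio_pow_powLaw k _ ht0 ht1,
            ← ENNReal.ofReal_mul (by positivity)]
          congr 1
          have he : (k + 1 + 1).choose 2 = (k + 1).choose 2 + k + 1 := by
            rw [Nat.choose_succ_succ', Nat.choose_one_right]; ring
          have he' : ((k + 1).choose 2 : ℝ) = (k + 1) * k / 2 := by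
            rw [Nat.cast_choose_two]; push_cast; ring
          rw [he, factorial_succ (k + 1)]
          push_cast
          rw [he']
          field_simp
          ring

theorem stmt_2_general {n : ℕ} {Ω : Type*} [MeasurableSpace Ω]
    (μ : Measure Ω) (Z : Fin n → Ω → ℝ) (ρ : Ω → Equiv.Perm (Fin n))
    (h : IsInverseUnfair μ Z ρ) :
    μ {ω | ρ ω = 1}
      = ENNReal.ofReal ((2 : ℝ) ^ n / (Nat.factorial (n + 1) : ℝ)) := by
  have := h.prob
  have hlaw : μ.map (fun ω i => Z i ω) = Measure.pi fun i : Fin n => powLaw i := by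
    rw [h.indep.map_fun_eq_pi_map fun i => (h.meas i).aemeasurable]
    exact congrArg Measure.pi (funext fun i => map_eq_powLaw (h.meas i).aemeasurable (h.cdf i))
  have hρ : {ω | ρ ω = 1} =ᵐ[μ] (fun ω i => Z i ω) ⁻¹' {x | StrictMono x} := by
    filter_upwards [h.rank] with ω hω
    exact propext (perm_eq_one_iff_strictMono hω)
  calc μ {ω | ρ ω = 1} = Measure.pi (fun i : Fin n => powLaw i) {x | StrictMono x} := by
        rw [measure_congr hρ, ← hlaw,
          Measure.map_apply (measurable_pi_lambda _ h.meas) (measurableSet_strictMono n)]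
    _ = Measure.pi (fun i : Fin n => powLaw i) (strictMonoBelow n 1) :=
        pi_strictMono_eq_strictMonoBelow _ fun i => (ae_mem_Ioo_powLaw i).mono fun s hs => hs.2
    _ = _ := by rw [pi_powLaw_strictMonoBelow n zero_le_one le_rfl, one_pow, mul_one]

/-- The probability that the inverse-unfair permutation `ρ_n` is the identity
permutation equals `2^n / (n+1)!`. -/
theorem stmt_2 {n : ℕ} (hn : 1 ≤ n) {Ω : Type*} [MeasurableSpace Ω]
    (μ : Measure Ω) (Z : Fin n → Ω → ℝ) (ρ : Ω → Equiv.Perm (Fin n))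
    (h : IsInverseUnfair μ Z ρ) :
    μ {ω | ρ ω = 1}
      = ENNReal.ofReal ((2 : ℝ) ^ n / (Nat.factorial (n + 1) : ℝ)) :=
  stmt_2_general μ Z ρ h
end

section
/- For every permutation σ ∈ S_n, one has P(ρ_n = w_0) ≤ P(ρ_n = σ) ≤ P(ρ_n = id), where id is the identity permutation and w_0 is the reversal permutation w_0(i) = n+1−i; that is, the probability mass function of ρ_n attains its maximum at the identity and its minimum at the reversal. -/
/-!
Write `f k t = (k + 1) t^k` for the density of `Z_k` on `[0, 1]`. By independence, `P(ρ = σ)` is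
the integral of `∏ₖ f k (x k)` over the cone of the `x` ordered like `σ`. If `i < j` is an inversion
of `σ`, exchanging the coordinates `i` and `j` maps this cone onto the cone of `σ * (i j)`, on which
`x i < x j`; there the exchanged density is at most the original one, because `f j / f i` is
nondecreasing. So removing an inversion never decreases `P(ρ = σ)`. Removing inversions one at a
time sorts any permutation into the identity, and turns the reversal into any permutation.
-/

open MeasureTheory ProbabilityTheory Filter Set Equiv
open scoped ENNReal

namespace Equiv.Perm

variable {α β : Type*} [LinearOrder α] [Fintype α] [Preorder β]

def IsSortingMonotone (P : Perm α → β) : Prop :=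
  ∀ σ : Perm α, ∀ i j : α, i < j → σ j < σ i → P σ ≤ P (σ * swap i j)

theorem eq_of_forall_lt_iff {σ τ : Perm α} (h : ∀ i j, σ i < σ j ↔ τ i < τ j) : σ = τ := by
  have hmono : StrictMono (τ ∘ σ.symm) := fun a b hab => by
    simpa using (h (σ.symm a) (σ.symm b)).1 (by simpa using hab)
  ext i
  simpa using (congrFun hmono.eq_id (σ i)).symm

theorem IsSortingMonotone.le_one {P : Perm α → β} (hP : IsSortingMonotone P) (σ : Perm α) :
    P σ ≤ P 1 := by
  induction hm : σ.support.card using Nat.strong_induction_on generalizing σ with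
  | _ m ih =>
    obtain rfl | hσ := eq_or_ne σ 1
    · exact le_rfl
    have hne : σ.support.Nonempty :=
      Finset.nonempty_iff_ne_empty.mpr (support_eq_empty_iff.not.mpr hσ)
    set i := σ.support.min' hne
    have hi : σ i ≠ i := mem_support.mp (σ.support.min'_mem hne)
    have hfix : ∀ k, k < i → σ k = k := fun k hk =>
      not_not.mp fun h => (σ.support.min'_le k (mem_support.mpr h)).not_gt hk
    have hlt : i < σ i := (lt_or_gt_of_ne hi).resolve_left fun h =>
      hi (σ.injective (hfix _ h))
    set j := σ⁻¹ i
    have hσj : σ j = i := σ.apply_symm_apply i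
    have hji : j ≠ i := fun h => hi (h ▸ hσj)
    have hij : i < j := (lt_or_gt_of_ne hji).resolve_left fun h => hji (hfix j h ▸ hσj)
    have hswap : σ * swap i j = swap i (σ i) * σ := by
      rw [mul_swap_eq_swap_mul, hσj, swap_comm]
    calc P σ ≤ P (σ * swap i j) := hP σ i j hij (hσj ▸ hlt)
      _ ≤ P 1 := by
        rw [hswap]
        exact ih _ (hm ▸ card_support_swap_mul hi) _ rfl

theorem IsSortingMonotone.revPerm_le {n : ℕ} {P : Perm (Fin n) → β} (hP : IsSortingMonotone P)
    (σ : Perm (Fin n)) : P Fin.revPerm ≤ P σ := by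
  -- left multiplication by the reversal exchanges the inversions and the non-inversions
  have hQ : IsSortingMonotone fun τ => OrderDual.toDual (P (Fin.revPerm * τ)) := by
    intro τ i j hij hτ
    have h := hP (Fin.revPerm * τ * swap i j) i j hij (by simpa using hτ)
    simpa only [OrderDual.toDual_le_toDual, mul_assoc, swap_mul_self, mul_one] using h
  have hrev : (Fin.revPerm : Perm (Fin n)) * Fin.revPerm = 1 := by
    ext k; simp
  have h := hQ.le_one (Fin.revPerm * σ)
  rwa [← mul_assoc, hrev, one_mul, mul_one, OrderDual.toDual_le_toDual] at h

end Equiv.Perm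

section RankSet

variable {ι α : Type*}

def rankSet [LT ι] [LT α] (σ : Perm ι) : Set (ι → α) :=
  {x | ∀ i j, x i < x j ↔ σ i < σ j}

theorem preimage_rankSet_mul_swap [LT ι] [LT α] [DecidableEq ι] (σ : Perm ι) (i j : ι) :
    (fun x : ι → α => x ∘ swap i j) ⁻¹' rankSet (σ * swap i j) = rankSet σ := by
  ext x
  simp only [rankSet, mem_preimage, mem_ofPred_eq, Function.comp_apply, Perm.mul_apply]
  constructor
  · intro hx a b
    simpa using hx (swap i j a) (swap i j b)
  · intro hx a b
    exact hx _ _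

theorem lt_of_mem_rankSet_mul_swap [LT ι] [LT α] [DecidableEq ι] {σ : Perm ι} {i j : ι}
    (hσ : σ j < σ i) {x : ι → α} (hx : x ∈ rankSet (σ * swap i j)) : x i < x j :=
  (hx i j).2 (by simpa using hσ)

theorem measurableSet_rankSet [LT ι] [Finite ι] [TopologicalSpace α] [LinearOrder α]
    [OrderClosedTopology α] [SecondCountableTopology α] [MeasurableSpace α]
    [OpensMeasurableSpace α] (σ : Perm ι) : MeasurableSet (rankSet σ : Set (ι → α)) := by
  simp only [rankSet, ofPred_forall]
  refine .iInter fun i => .iInter fun j => ?_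
  have hlt : MeasurableSet {x : ι → α | x i < x j} :=
    measurableSet_lt (measurable_pi_apply i) (measurable_pi_apply j)
  have hle : MeasurableSet {x : ι → α | x j ≤ x i} :=
    measurableSet_le (measurable_pi_apply j) (measurable_pi_apply i)
  by_cases hσ : σ i < σ j
  · simpa [hσ] using hlt
  · simpa [hσ] using hle

end RankSet

section Swap

variable {ι α : Type*} [Fintype ι] [DecidableEq ι]

theorem prod_comp_swap_le [Preorder α] (f : ι → α → ℝ≥0∞) {i j : ι} (hij : i ≠ j)
    (hf : ∀ u v, u ≤ v → f i v * f j u ≤ f i u * f j v) {x : ι → α} (hx : x i ≤ x j) :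
    ∏ k, f k (x (swap i j k)) ≤ ∏ k, f k (x k) := by
  rw [← Finset.prod_mul_prod_compl {i, j},
    ← Finset.prod_mul_prod_compl {i, j} (fun k => f k (x k)), Finset.prod_pair hij,
    Finset.prod_pair hij, swap_apply_left, swap_apply_right]
  have hrest : ∏ k ∈ {i, j}ᶜ, f k (x (swap i j k)) = ∏ k ∈ {i, j}ᶜ, f k (x k) :=
    Finset.prod_congr rfl fun k hk => by
      simp only [Finset.mem_compl, Finset.mem_insert, Finset.mem_singleton, not_or] at hk
      rw [swap_apply_of_ne_of_ne hk.1 hk.2]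
  rw [hrest]
  gcongr ?_ * _
  exact hf _ _ hx

theorem setLIntegral_preimage_swap_le [MeasurableSpace α] [Preorder α] (ν : Measure α)
    [SigmaFinite ν] (f : ι → α → ℝ≥0∞) {i j : ι} (hij : i ≠ j)
    (hf : ∀ u v, u ≤ v → f i v * f j u ≤ f i u * f j v) {S : Set (ι → α)} (hS : MeasurableSet S)
    (hSij : ∀ x ∈ S, x i ≤ x j) :
    ∫⁻ x in (fun x => x ∘ swap i j) ⁻¹' S, ∏ k, f k (x k) ∂(Measure.pi fun _ => ν)
      ≤ ∫⁻ x in S, ∏ k, f k (x k) ∂(Measure.pi fun _ => ν) := by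
  let T := MeasurableEquiv.piCongrLeft (fun _ : ι => α) (swap i j)
  have hT : ⇑T = fun x => x ∘ swap i j := by
    funext x k
    simp [T, MeasurableEquiv.coe_piCongrLeft, Equiv.piCongrLeft_apply_eq_cast]
  have hTT : ∀ x, T (T x) = x := fun x => by funext k; simp [hT]
  have hmp := measurePreserving_piCongrLeft (fun _ : ι => ν) (swap i j)
  calc ∫⁻ x in (fun x => x ∘ swap i j) ⁻¹' S, ∏ k, f k (x k) ∂(Measure.pi fun _ => ν)
      = ∫⁻ x in T ⁻¹' S, ∏ k, f k (T (T x) k) ∂(Measure.pi fun _ => ν) := by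
        simp_rw [hTT, hT]
    _ = ∫⁻ y in S, ∏ k, f k (T y k) ∂(Measure.pi fun _ => ν) :=
        hmp.setLIntegral_comp_preimage_emb T.measurableEmbedding (fun y => ∏ k, f k (T y k)) S
    _ ≤ ∫⁻ y in S, ∏ k, f k (y k) ∂(Measure.pi fun _ => ν) :=
        setLIntegral_mono' hS fun y hy => by
          rw [hT]
          exact prod_comp_swap_le f hij hf (hSij y hy)

end Swap

theorem MeasureTheory.Measure.pi_withDensity {ι : Type*} [Fintype ι] {X : ι → Type*}
    [∀ i, MeasurableSpace (X i)] (ν : ∀ i, Measure (X i)) [∀ i, IsProbabilityMeasure (ν i)]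
    (f : ∀ i, X i → ℝ≥0∞) (hf : ∀ i, Measurable (f i))
    [∀ i, SigmaFinite ((ν i).withDensity (f i))] :
    Measure.pi (fun i => (ν i).withDensity (f i)) =
      (Measure.pi ν).withDensity fun x => ∏ i, f i (x i) := by
  refine Measure.pi_eq fun s hs => ?_
  have hind : (univ.pi s).indicator (fun x => ∏ i, f i (x i)) =
      fun x => ∏ i, (s i).indicator (f i) (x i) := by
    classical
    ext x
    simp [indicator_apply, Finset.prod_ite_zero]
  rw [withDensity_apply _ (.univ_pi hs), ← lintegral_indicator (.univ_pi hs), hind,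
    lintegral_prod_eq_prod_lintegral_of_indepFun _ _
      (iIndepFun_pi fun i => ((hf i).indicator (hs i)).aemeasurable)
      fun i => ((hf i).indicator (hs i)).comp (measurable_pi_apply i)]
  refine Finset.prod_congr rfl fun i _ => ?_
  rw [withDensity_apply _ (hs i), ← lintegral_indicator (hs i),
    (measurePreserving_eval ν i).lintegral_comp ((hf i).indicator (hs i))]

theorem pow_mul_pow_le_pow_mul_pow {R : Type*} [CommSemiring R] [PartialOrder R] [IsOrderedRing R]
    {a b : R} (ha : 0 ≤ a) (hab : a ≤ b) {k l : ℕ} (hkl : k ≤ l) :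
    b ^ k * a ^ l ≤ a ^ k * b ^ l := by
  obtain ⟨d, rfl⟩ := Nat.exists_eq_add_of_le hkl
  rw [pow_add, pow_add, mul_left_comm]
  gcongr
  exact pow_nonneg (ha.trans hab) k

-- A density with respect to Lebesgue measure on `[0, 1]`; `ENNReal.ofReal` sends negative `t` to
-- `0`, so the likelihood-ratio inequality `maxUniformDensity_mul_le` holds for all `u ≤ v`.
noncomputable def maxUniformDensity (k : ℕ) (t : ℝ) : ℝ≥0∞ :=
  (k + 1) * ENNReal.ofReal t ^ k

theorem measurable_maxUniformDensity (k : ℕ) : Measurable (maxUniformDensity k) :=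
  measurable_const.mul (ENNReal.measurable_ofReal.pow_const k)

theorem maxUniformDensity_mul_le {k l : ℕ} (hkl : k ≤ l) {u v : ℝ} (huv : u ≤ v) :
    maxUniformDensity k v * maxUniformDensity l u ≤
      maxUniformDensity k u * maxUniformDensity l v := by
  have h := pow_mul_pow_le_pow_mul_pow (by positivity) (ENNReal.ofReal_le_ofReal huv) hkl
  simp only [maxUniformDensity]
  calc _ = ((k + 1) * (l + 1)) * (ENNReal.ofReal v ^ k * ENNReal.ofReal u ^ l) := by ring
    _ ≤ ((k + 1) * (l + 1)) * (ENNReal.ofReal u ^ k * ENNReal.ofReal v ^ l) := by gcongr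
    _ = _ := by ring

theorem setLIntegral_maxUniformDensity_Icc (k : ℕ) {a : ℝ} (ha : 0 ≤ a) :
    ∫⁻ t in Icc 0 a, maxUniformDensity k t = ENNReal.ofReal (a ^ (k + 1)) := by
  have hcongr : EqOn (maxUniformDensity k) (fun t => ENNReal.ofReal ((k + 1) * t ^ k)) (Icc 0 a) :=
    fun t ht => by
      dsimp only [maxUniformDensity]
      rw [ENNReal.ofReal_mul (by positivity), ENNReal.ofReal_pow ht.1]
      congr 1
      exact_mod_cast (ENNReal.ofReal_natCast (k + 1)).symm
  rw [setLIntegral_congr_fun measurableSet_Icc hcongr,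
    ← ofReal_integral_eq_lintegral_ofReal
      (f := fun t : ℝ => (k + 1) * t ^ k) (Continuous.integrableOn_Icc (by fun_prop))
      ((ae_restrict_iff' measurableSet_Icc).2 (.of_forall fun t ht => by
        have := ht.1; positivity)),
    integral_Icc_eq_integral_Ioc, ← intervalIntegral.integral_of_le ha,
    intervalIntegral.integral_const_mul, integral_pow]
  congr 1
  field_simp
  ring

instance : IsProbabilityMeasure (volume.restrict (Icc (0 : ℝ) 1)) :=
  ⟨by simp⟩

noncomputable abbrev maxUniformLaw (k : ℕ) : Measure ℝ :=
  (volume.restrict (Icc 0 1)).withDensity (maxUniformDensity k)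

theorem maxUniformLaw_Iic (k : ℕ) {a : ℝ} (ha : a ∈ Icc 0 1) :
    maxUniformLaw k (Iic a) = ENNReal.ofReal (a ^ (k + 1)) := by
  rw [withDensity_apply _ measurableSet_Iic, Measure.restrict_restrict measurableSet_Iic,
    show Iic a ∩ Icc 0 1 = Icc 0 a from
      ext fun t => ⟨fun h => ⟨h.2.1, h.1⟩, fun h => ⟨h.2, h.1, h.2.trans ha.2⟩⟩,
    setLIntegral_maxUniformDensity_Icc k ha.1]

instance (k : ℕ) : IsProbabilityMeasure (maxUniformLaw k) :=
  ⟨by rw [withDensity_apply _ .univ, Measure.restrict_univ,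
    setLIntegral_maxUniformDensity_Icc k zero_le_one, one_pow, ENNReal.ofReal_one]⟩

theorem measure_Iic_projIcc {m : Measure ℝ} [IsProbabilityMeasure m] (h0 : m (Iic 0) = 0)
    (h1 : m (Iic 1) = 1) (a : ℝ) : m (Iic a) = m (Iic (projIcc 0 1 zero_le_one a)) := by
  rcases le_total a 0 with ha | ha
  · rw [projIcc_of_le_left _ ha, h0]
    exact measure_mono_null (Iic_subset_Iic.2 ha) h0
  rcases le_total 1 a with ha' | ha'
  · rw [projIcc_of_right_le _ ha', h1]
    exact le_antisymm prob_le_one (h1 ▸ measure_mono (Iic_subset_Iic.2 ha'))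
  · rw [projIcc_of_mem _ ⟨ha, ha'⟩]

theorem MeasureTheory.Measure.ext_of_Iic_of_mem_Icc {m₁ m₂ : Measure ℝ}
    [IsProbabilityMeasure m₁] [IsProbabilityMeasure m₂]
    (h : ∀ a ∈ Icc (0 : ℝ) 1, m₁ (Iic a) = m₂ (Iic a))
    (h0 : m₁ (Iic 0) = 0) (h1 : m₁ (Iic 1) = 1) : m₁ = m₂ := by
  have h0' : m₂ (Iic 0) = 0 := h 0 (left_mem_Icc.2 zero_le_one) ▸ h0
  have h1' : m₂ (Iic 1) = 1 := h 1 (right_mem_Icc.2 zero_le_one) ▸ h1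
  refine Measure.ext_of_Iic m₁ m₂ fun a => ?_
  rw [measure_Iic_projIcc h0 h1, measure_Iic_projIcc h0' h1']
  exact h _ (projIcc 0 1 zero_le_one a).2

namespace IsInverseUnfair

variable {n : ℕ} {Ω : Type*} [MeasurableSpace Ω] {μ : Measure Ω} {Z : Fin n → Ω → ℝ}
  {ρ : Ω → Perm (Fin n)}

theorem map_apply_Iic (h : IsInverseUnfair μ Z ρ) (i : Fin n) {a : ℝ} (ha : a ∈ Icc 0 1) :
    μ.map (Z i) (Iic a) = ENNReal.ofReal (a ^ ((i : ℕ) + 1)) := by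
  rw [Measure.map_apply (h.meas i) measurableSet_Iic]
  exact h.cdf i a ha

theorem map_eq_maxUniformLaw (h : IsInverseUnfair μ Z ρ) (i : Fin n) :
    μ.map (Z i) = maxUniformLaw i := by
  have := h.prob
  have := Measure.isProbabilityMeasure_map (μ := μ) (h.meas i).aemeasurable
  refine Measure.ext_of_Iic_of_mem_Icc (fun a ha => ?_) ?_ ?_
  · rw [h.map_apply_Iic i ha, maxUniformLaw_Iic i ha]
  · simp [h.map_apply_Iic i (left_mem_Icc.2 zero_le_one)]
  · simp [h.map_apply_Iic i (right_mem_Icc.2 zero_le_one)]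

theorem ae_eq_preimage_rankSet (h : IsInverseUnfair μ Z ρ) (σ : Perm (Fin n)) :
    {ω | ρ ω = σ} =ᵐ[μ] (fun ω i => Z i ω) ⁻¹' rankSet σ := by
  rw [eventuallyEq_set]
  filter_upwards [h.rank] with ω hω
  show ρ ω = σ ↔ ∀ i j, Z i ω < Z j ω ↔ σ i < σ j
  simp_rw [← hω]
  exact ⟨fun h => h ▸ fun _ _ => Iff.rfl, Perm.eq_of_forall_lt_iff⟩

theorem measure_eq_setLIntegral (h : IsInverseUnfair μ Z ρ) (σ : Perm (Fin n)) :
    μ {ω | ρ ω = σ} = ∫⁻ x in rankSet σ, ∏ k : Fin n, maxUniformDensity k (x k)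
      ∂(Measure.pi fun _ => volume.restrict (Icc 0 1)) := by
  have := h.prob
  have hZ : Measurable fun ω i => Z i ω := measurable_pi_lambda _ h.meas
  calc μ {ω | ρ ω = σ} = μ ((fun ω i => Z i ω) ⁻¹' rankSet σ) :=
        measure_congr (h.ae_eq_preimage_rankSet σ)
    _ = μ.map (fun ω i => Z i ω) (rankSet σ) :=
        (Measure.map_apply hZ (measurableSet_rankSet σ)).symm
    _ = Measure.pi (fun i : Fin n => maxUniformLaw i) (rankSet σ) := by
        rw [h.indep.map_fun_eq_pi_map fun i => (h.meas i).aemeasurable]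
        simp_rw [h.map_eq_maxUniformLaw]
    _ = _ := by
        rw [Measure.pi_withDensity _ _ fun k : Fin n => measurable_maxUniformDensity k,
          withDensity_apply _ (measurableSet_rankSet σ)]

theorem isSortingMonotone (h : IsInverseUnfair μ Z ρ) :
    Perm.IsSortingMonotone fun σ => μ {ω | ρ ω = σ} := by
  intro σ i j hij hσ
  dsimp only
  rw [h.measure_eq_setLIntegral, h.measure_eq_setLIntegral, ← preimage_rankSet_mul_swap σ i j]
  exact setLIntegral_preimage_swap_le _ _ hij.ne
    (fun u v huv => maxUniformDensity_mul_le (Fin.val_le_of_le hij.le) huv)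
    (measurableSet_rankSet _) fun x hx => (lt_of_mem_rankSet_mul_swap hσ hx).le

end IsInverseUnfair

theorem stmt_5_general {n : ℕ} {Ω : Type*} [MeasurableSpace Ω]
    (μ : Measure Ω) (Z : Fin n → Ω → ℝ) (ρ : Ω → Equiv.Perm (Fin n))
    (h : IsInverseUnfair μ Z ρ) (σ : Equiv.Perm (Fin n)) :
    μ {ω | ρ ω = Fin.revPerm} ≤ μ {ω | ρ ω = σ} ∧
    μ {ω | ρ ω = σ} ≤ μ {ω | ρ ω = 1} :=
  ⟨h.isSortingMonotone.revPerm_le σ, h.isSortingMonotone.le_one σ⟩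

/-- The probability mass function of the inverse-unfair permutation `ρ_n`
attains its maximum at the identity and its minimum at the reversal
permutation `w₀(i) = n + 1 - i`: for every `σ ∈ S_n`,
`P(ρ_n = w₀) ≤ P(ρ_n = σ) ≤ P(ρ_n = id)`. -/
theorem stmt_5 {n : ℕ} (hn : 1 ≤ n) {Ω : Type*} [MeasurableSpace Ω]
    (μ : Measure Ω) (Z : Fin n → Ω → ℝ) (ρ : Ω → Equiv.Perm (Fin n))
    (h : IsInverseUnfair μ Z ρ) (σ : Equiv.Perm (Fin n)) :
    μ {ω | ρ ω = Fin.revPerm} ≤ μ {ω | ρ ω = σ} ∧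
    μ {ω | ρ ω = σ} ≤ μ {ω | ρ ω = 1} :=
  stmt_5_general μ Z ρ h σ
end

section
/- The total variation distance between the law of the inverse-unfair permutation ρ_n and the uniform distribution on S_n converges to 1 as n → ∞. -/
open MeasureTheory ProbabilityTheory Filter
open scoped ENNReal NNReal Topology

/-! Player `0` draws a single uniform variable `U`. If `U ≤ t`, every player ranked below
player `0` has `Z_j ≤ t`, and by Markov's inequality at least `k` of them do so with
probability at most `∑_j t^(j+1) / k ≤ t / ((1 - t) k)`. With `t = 1 - 1/r` and `k = r²`
this gives `P(ρ_n(0) ≥ r²) ≤ 2/r`, whereas a uniform permutation has `σ(0) < r²` with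
probability at most `r²/n`. Hence `d_TV ≥ 1 - 2/r - r²/n` for every `r`; let `n → ∞`,
then `r → ∞`. -/

open Finset

section TotalVariation

variable {α : Type*} [Fintype α]

noncomputable def tvDist (p q : α → ℝ) : ℝ := 1 / 2 * ∑ x, |p x - q x|

lemma sum_sub_sum_le_tvDist {p q : α → ℝ} (hpq : ∑ x, p x = ∑ x, q x) (A : Finset α) :
    ∑ x ∈ A, p x - ∑ x ∈ A, q x ≤ tvDist p q := by
  classical
  have hsplit : ∑ x, |p x - q x| = ∑ x ∈ A, |p x - q x| + ∑ x ∈ Aᶜ, |p x - q x| :=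
    (sum_add_sum_compl A _).symm
  have hcompl : ∑ x ∈ A, (p x - q x) = -∑ x ∈ Aᶜ, (p x - q x) := by
    rw [eq_neg_iff_add_eq_zero, sum_add_sum_compl, sum_sub_distrib, hpq, sub_self]
  have hA : ∑ x ∈ A, (p x - q x) ≤ ∑ x ∈ A, |p x - q x| :=
    sum_le_sum fun x _ => le_abs_self _
  have hAc : -∑ x ∈ Aᶜ, (p x - q x) ≤ ∑ x ∈ Aᶜ, |p x - q x| := by
    rw [← sum_neg_distrib]
    exact sum_le_sum fun x _ => neg_le_abs _
  rw [tvDist, hsplit, ← sum_sub_distrib]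
  linarith

lemma tvDist_le_one {p q : α → ℝ} (hp : ∀ x, 0 ≤ p x) (hq : ∀ x, 0 ≤ q x)
    (hp1 : ∑ x, p x = 1) (hq1 : ∑ x, q x = 1) : tvDist p q ≤ 1 := by
  have : ∑ x, |p x - q x| ≤ ∑ x, (p x + q x) := sum_le_sum fun x _ => by
    rw [abs_sub_le_iff]; constructor <;> linarith [hp x, hq x]
  rw [sum_add_distrib, hp1, hq1] at this
  rw [tvDist]
  linarith

end TotalVariation

lemma card_filter_perm_apply_mem_mul_card {α : Type*} [Fintype α] [DecidableEq α] (i : α)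
    (s : Finset α) :
    #{σ : Equiv.Perm α | σ i ∈ s} * Fintype.card α = #s * Fintype.card (Equiv.Perm α) := by
  have fibre_eq (j j' : α) :
      #{σ : Equiv.Perm α | σ i = j} = #{σ : Equiv.Perm α | σ i = j'} :=
    card_equiv (Equiv.mulLeft (Equiv.swap j j')) fun σ => by simp [Equiv.swap_apply_eq_iff]
  have total : ∑ j, #{σ : Equiv.Perm α | σ i = j} = Fintype.card (Equiv.Perm α) := by
    rw [← card_univ, card_eq_sum_card_fiberwise (f := fun σ => σ i) (t := univ)
      fun _ _ => mem_coe.2 (mem_univ _)]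
  have fibre (j : α) : #{σ : Equiv.Perm α | σ i = j} * Fintype.card α =
      Fintype.card (Equiv.Perm α) := by
    rw [← total, sum_congr rfl fun j' _ => (fibre_eq j j').symm, sum_const, card_univ,
      smul_eq_mul, mul_comm]
  rw [card_eq_sum_card_fiberwise (f := fun σ : Equiv.Perm α => σ i) (t := s)
    (fun σ hσ => by simpa using hσ), sum_mul, card_eq_sum_ones s, sum_mul]
  refine sum_congr rfl fun j hj => ?_
  rw [filter_filter, one_mul, ← fibre j]
  congr 2
  ext σ
  simp only [mem_filter, mem_univ, true_and]
  exact and_iff_right_of_imp fun hσ => hσ ▸ hj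

section Markov

variable {Ω ι : Type*} [Fintype ι] {s : ι → Set Ω} [∀ ω j, Decidable (ω ∈ s j)]

lemma natCast_card_filter_mem_eq_sum_indicator (ω : Ω) :
    (#{j | ω ∈ s j} : ℝ≥0∞) = ∑ j, (s j).indicator 1 ω := by
  simp [Set.indicator_apply, sum_boole]

lemma lintegral_card_filter_mem [MeasurableSpace Ω] (μ : Measure Ω)
    (hs : ∀ j, MeasurableSet (s j)) :
    ∫⁻ ω, (#{j | ω ∈ s j} : ℝ≥0∞) ∂μ = ∑ j, μ (s j) := by
  simp_rw [natCast_card_filter_mem_eq_sum_indicator]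
  rw [lintegral_finsetSum _ fun j _ => measurable_one.indicator (hs j)]
  exact sum_congr rfl fun j _ => lintegral_indicator_one (hs j)

lemma mul_measure_le_card_mem_le_sum [MeasurableSpace Ω] (μ : Measure Ω)
    (hs : ∀ j, MeasurableSet (s j)) (k : ℝ≥0∞) :
    k * μ {ω | k ≤ #{j | ω ∈ s j}} ≤ ∑ j, μ (s j) := by
  have hmeas : Measurable fun ω => (#{j | ω ∈ s j} : ℝ≥0∞) := by
    simp_rw [natCast_card_filter_mem_eq_sum_indicator]
    exact Finset.measurable_sum _ fun j _ => measurable_one.indicator (hs j)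
  exact (mul_meas_ge_le_lintegral₀ hmeas.aemeasurable k).trans_eq
    (lintegral_card_filter_mem μ hs)

end Markov

lemma Equiv.Perm.val_apply_eq_card_filter_lt {n : ℕ} (π : Equiv.Perm (Fin n)) (i : Fin n) :
    (π i : ℕ) = #{j | π j < π i} := by
  rw [← Fin.card_Iio]
  exact card_equiv π.symm fun j => by
    simp only [mem_Iio, mem_filter, mem_univ, Equiv.apply_symm_apply, true_and]

lemma sum_pow_succ_le_div_one_sub {t : ℝ} (ht0 : 0 ≤ t) (ht1 : t < 1) (n : ℕ) :
    ∑ j : Fin n, t ^ ((j : ℕ) + 1) ≤ t / (1 - t) := by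
  have := geom_sum_Ico_le_of_lt_one (m := 1) (n := n + 1) ht0 ht1
  rw [sum_Ico_eq_sum_range] at this
  simpa [Fin.sum_univ_eq_sum_range (fun j => t ^ (j + 1)), add_comm] using this

lemma sum_perm_fin_one_div_factorial (n : ℕ) :
    ∑ _σ : Equiv.Perm (Fin n), 1 / (n.factorial : ℝ) = 1 := by
  rw [sum_const, card_univ, Fintype.card_perm, Fintype.card_fin, nsmul_eq_mul]
  field_simp

namespace IsInverseUnfair

variable {n : ℕ} {Ω : Type*} [MeasurableSpace Ω] {μ : Measure Ω} {Z : Fin n → Ω → ℝ}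
  {ρ : Ω → Equiv.Perm (Fin n)}

lemma sum_toReal_measure_eq (h : IsInverseUnfair μ Z ρ) (S : Finset (Equiv.Perm (Fin n))) :
    ∑ σ ∈ S, (μ {ω | ρ ω = σ}).toReal = (μ {ω | ρ ω ∈ S}).toReal := by
  have := h.prob
  rw [← ENNReal.toReal_sum fun σ _ => measure_ne_top μ _]
  exact congrArg ENNReal.toReal (sum_measure_preimage_singleton S fun σ _ => h.rhoMeas σ)

lemma sum_toReal_measure_eq_one (h : IsInverseUnfair μ Z ρ) :
    ∑ σ, (μ {ω | ρ ω = σ}).toReal = 1 := by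
  have := h.prob
  simp [h.sum_toReal_measure_eq]

lemma ae_val_apply_eq_card_filter_lt (h : IsInverseUnfair μ Z ρ) :
    ∀ᵐ ω ∂μ, ∀ i, (ρ ω i : ℕ) = #{j | Z j ω < Z i ω} := by
  filter_upwards [h.rank] with ω hω i
  rw [Equiv.Perm.val_apply_eq_card_filter_lt]
  exact congrArg card (filter_congr fun j _ => hω j i)

lemma toReal_measure_le_rank_zero_mul_le (h : IsInverseUnfair μ Z ρ) (hn : 0 < n) (k : ℕ)
    {t : ℝ} (ht0 : 0 ≤ t) (ht1 : t < 1) :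
    (μ {ω | k ≤ (ρ ω ⟨0, hn⟩ : ℕ)}).toReal * k ≤ (1 - t) * k + t / (1 - t) := by
  have := h.prob
  set i0 : Fin n := ⟨0, hn⟩
  set B : Fin n → Set Ω := fun j => {ω | Z j ω ≤ t}
  have hB (j : Fin n) : MeasurableSet (B j) := measurableSet_le (h.meas j) measurable_const
  have hcover : {ω | k ≤ (ρ ω i0 : ℕ)} ≤ᵐ[μ]
      ({ω | t < Z i0 ω} ∪ {ω | (k : ℝ≥0∞) ≤ #{j | ω ∈ B j}} : Set Ω) := by
    filter_upwards [h.ae_val_apply_eq_card_filter_lt] with ω hrank hk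
    refine (lt_or_ge t (Z i0 ω)).imp id fun hle => ?_
    rw [Set.mem_ofPred_eq, Nat.cast_le]
    refine (hk.trans (hrank i0).le).trans (card_le_card fun j hj => ?_)
    simp only [mem_filter, mem_univ, true_and, B, Set.mem_ofPred_eq] at hj ⊢
    exact hj.le.trans hle
  have hhigh : μ {ω | t < Z i0 ω} = ENNReal.ofReal (1 - t) := by
    have hcompl : {ω | t < Z i0 ω} = (B i0)ᶜ := by ext ω; simp [B]
    rw [hcompl, measure_compl (hB i0) (measure_ne_top _ _), measure_univ,
      h.cdf i0 t ⟨ht0, ht1.le⟩, zero_add, pow_one, ENNReal.ofReal_sub 1 ht0, ENNReal.ofReal_one]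
  have hmarkov : (k : ℝ≥0∞) * μ {ω | (k : ℝ≥0∞) ≤ #{j | ω ∈ B j}} ≤
      ENNReal.ofReal (t / (1 - t)) := by
    refine (mul_measure_le_card_mem_le_sum μ hB k).trans ?_
    simp only [B, fun j => h.cdf j t ⟨ht0, ht1.le⟩]
    rw [← ENNReal.ofReal_sum_of_nonneg fun j _ => pow_nonneg ht0 _]
    exact ENNReal.ofReal_le_ofReal (sum_pow_succ_le_div_one_sub ht0 ht1 n)
  have hsplit := (measure_mono_ae hcover).trans (measure_union_le _ _)
  rw [hhigh] at hsplit
  have hsplit' := ENNReal.toReal_mono (by finiteness) hsplit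
  have hmarkov' := ENNReal.toReal_mono ENNReal.ofReal_ne_top hmarkov
  rw [ENNReal.toReal_add ENNReal.ofReal_ne_top (measure_ne_top _ _),
    ENNReal.toReal_ofReal (by linarith)] at hsplit'
  rw [ENNReal.toReal_mul, ENNReal.toReal_natCast,
    ENNReal.toReal_ofReal (div_nonneg ht0 (by linarith))] at hmarkov'
  nlinarith [Nat.cast_nonneg (α := ℝ) k]

lemma toReal_measure_sq_le_rank_zero_le (h : IsInverseUnfair μ Z ρ) (hn : 0 < n) {r : ℕ}
    (hr : 0 < r) : (μ {ω | r ^ 2 ≤ (ρ ω ⟨0, hn⟩ : ℕ)}).toReal ≤ 2 / r := by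
  have hrR : (0 : ℝ) < r := by exact_mod_cast hr
  have hr1 : 1 / (r : ℝ) ≤ 1 := by
    rw [div_le_one hrR]; exact_mod_cast hr
  have htail := h.toReal_measure_le_rank_zero_mul_le hn (r ^ 2) (t := 1 - 1 / r)
    (by linarith) (by linarith [one_div_pos.2 hrR])
  have hhigh : (1 - (1 - 1 / (r : ℝ))) * r ^ 2 = r := by field_simp; ring
  have hlow : (1 - 1 / (r : ℝ)) / (1 - (1 - 1 / r)) = r - 1 := by field_simp; ring
  push_cast at htail
  rw [hhigh, hlow] at htail
  rw [le_div_iff₀ hrR]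
  nlinarith [ENNReal.toReal_nonneg (a := μ {ω | r ^ 2 ≤ (ρ ω ⟨0, hn⟩ : ℕ)})]

lemma le_tvDist_uniform (h : IsInverseUnfair μ Z ρ) (hn : 0 < n) {r : ℕ} (hr : 0 < r) :
    1 - 2 / r - (r : ℝ) ^ 2 / n ≤
      tvDist (fun σ => (μ {ω | ρ ω = σ}).toReal) fun _ => 1 / (n.factorial : ℝ) := by
  set s : Finset (Fin n) := {v | (v : ℕ) < r ^ 2}
  set A : Finset (Equiv.Perm (Fin n)) := {σ | σ ⟨0, hn⟩ ∈ s}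
  have hlaw : 1 - 2 / r ≤ ∑ σ ∈ A, (μ {ω | ρ ω = σ}).toReal := by
    have hcompl : ∑ σ ∈ Aᶜ, (μ {ω | ρ ω = σ}).toReal =
        (μ {ω | r ^ 2 ≤ (ρ ω ⟨0, hn⟩ : ℕ)}).toReal := by
      rw [h.sum_toReal_measure_eq]; congr; ext ω; simp [A, s]
    have := sum_add_sum_compl A fun σ => (μ {ω | ρ ω = σ}).toReal
    rw [h.sum_toReal_measure_eq_one, hcompl] at this
    linarith [h.toReal_measure_sq_le_rank_zero_le hn hr]
  have hunif : ∑ σ ∈ A, 1 / (n.factorial : ℝ) ≤ (r : ℝ) ^ 2 / n := by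
    have hcard := card_filter_perm_apply_mem_mul_card (⟨0, hn⟩ : Fin n) s
    rw [Fin.card_filter_val_lt, Fintype.card_perm, Fintype.card_fin] at hcard
    have hcard' : (#A : ℝ) * n ≤ r ^ 2 * n.factorial := by
      exact_mod_cast hcard.trans_le (Nat.mul_le_mul_right _ (min_le_right _ _))
    rw [sum_const, nsmul_eq_mul, mul_one_div, div_le_div_iff₀ (by positivity) (by positivity)]
    exact hcard'
  have hsum_eq : ∑ σ, (μ {ω | ρ ω = σ}).toReal =
      ∑ _σ : Equiv.Perm (Fin n), 1 / (n.factorial : ℝ) := by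
    rw [h.sum_toReal_measure_eq_one, sum_perm_fin_one_div_factorial]
  linarith [sum_sub_sum_le_tvDist hsum_eq A]

end IsInverseUnfair

/-- The total variation distance between the law of the inverse-unfair
permutation `ρ_n` and the uniform distribution on `S_n` converges to `1` as
`n → ∞`.  (Here `d_TV = (1/2) Σ_σ |P(ρ_n = σ) - 1/n!|`.) -/
theorem stmt_7 (Ω : ℕ → Type*) [∀ n, MeasurableSpace (Ω n)]
    (μ : ∀ n, Measure (Ω n)) (Z : ∀ n, Fin n → Ω n → ℝ)
    (ρ : ∀ n, Ω n → Equiv.Perm (Fin n))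
    (h : ∀ n, IsInverseUnfair (μ n) (Z n) (ρ n)) :
    Tendsto (fun n => (1 / 2 : ℝ) * ∑ σ : Equiv.Perm (Fin n),
        |(μ n {ω | ρ n ω = σ}).toReal - 1 / (Nat.factorial n : ℝ)|)
      atTop (𝓝 1) := by
  refine tendsto_order.2 ⟨fun a ha => ?_, fun a ha => Eventually.of_forall fun n =>
    (tvDist_le_one (fun _ => ENNReal.toReal_nonneg) (fun _ => by positivity)
      (h n).sum_toReal_measure_eq_one (sum_perm_fin_one_div_factorial n)).trans_lt ha⟩
  obtain ⟨r, hr⟩ := exists_nat_gt (2 / (1 - a))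
  have hr0 : 0 < (r : ℝ) := (div_pos two_pos (sub_pos.2 ha)).trans hr
  have hgap : a < 1 - 2 / r := by
    rw [div_lt_iff₀ (sub_pos.2 ha)] at hr
    have : 2 / (r : ℝ) < 1 - a := by rw [div_lt_iff₀ hr0]; linarith
    linarith
  have hlim : Tendsto (fun n : ℕ => 1 - 2 / (r : ℝ) - (r : ℝ) ^ 2 / n) atTop
      (𝓝 (1 - 2 / (r : ℝ))) := by
    simpa using tendsto_const_nhds.sub (tendsto_const_div_atTop_nhds_zero_nat ((r : ℝ) ^ 2))
  filter_upwards [hlim.eventually (lt_mem_nhds hgap), eventually_gt_atTop 0] with n hlt hn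
  exact hlt.trans_le ((h n).le_tvDist_uniform hn (Nat.cast_pos.1 hr0))
end

section
/- The total variation distance between the law of the unfair permutation γ_n and the uniform distribution on S_n converges to 1 as n → ∞. -/
open MeasureTheory ProbabilityTheory Filter
open scoped ENNReal NNReal Topology

/-!
Pair player `i` with player `i + n / 2` (for `i < n / 2`) and count the pairs in which the later
player is ranked higher. For a uniform permutation these `m = n / 2` events have probability `1/2`
and are pairwise uncorrelated, because precomposing with the transposition of one pair flips that
event and fixes the others; so the count has mean `m / 2` and variance `m / 4`. Under the
inverse-unfair permutation the events are independent and player `j` beats player `i` with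
probability `(j + 1) / (i + j + 2) ≥ 2 / 3`, so the count has mean at least `m / 2 + m / 6` and
variance at most `m / 4`. By Chebyshev, the count is at least `m / 2 + m / 12` with probability
at least `1 - 36 / m` for `ρ_n` and at most `36 / m` for a uniform permutation. Hence the total
variation distance from uniform of `ρ_n`, which is also that of `γ_n = ρ_n⁻¹`, is at least
`1 - 72 / m`.
-/

open Set

-- The law of `U ^ (1 / k)` for `U` uniform on `(0, 1]`, whose distribution function is `t ^ k`.
noncomputable def powUniform (k : ℕ) : Measure ℝ :=
  (volume.restrict (Ioc (0 : ℝ) 1)).map (fun u => u ^ (k : ℝ)⁻¹)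

instance : IsProbabilityMeasure (volume.restrict (Ioc (0 : ℝ) 1)) :=
  ⟨by simp [Real.volume_Ioc]⟩

instance (k : ℕ) : IsProbabilityMeasure (powUniform k) :=
  Measure.isProbabilityMeasure_map (measurable_id'.pow_const _).aemeasurable

lemma powUniform_Iic {k : ℕ} (hk : k ≠ 0) {t : ℝ} (ht : 0 ≤ t) :
    powUniform k (Iic t) = ENNReal.ofReal (min (t ^ k) 1) := by
  have hroot {u : ℝ} (hu : 0 < u) : u ^ (k : ℝ)⁻¹ ≤ t ↔ u ≤ t ^ k := by
    rw [Real.rpow_inv_le_iff_of_pos hu.le ht (by positivity), Real.rpow_natCast]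
  have hset :
      (fun u : ℝ => u ^ (k : ℝ)⁻¹) ⁻¹' Iic t ∩ Ioc 0 1 = Ioc 0 (min (t ^ k) 1) := by
    ext u
    simp only [mem_inter_iff, mem_preimage, mem_Iic, mem_Ioc, le_min_iff]
    exact ⟨fun ⟨h, hu0, hu1⟩ => ⟨hu0, (hroot hu0).1 h, hu1⟩,
      fun ⟨hu0, h, hu1⟩ => ⟨(hroot hu0).2 h, hu0, hu1⟩⟩
  rw [powUniform, Measure.map_apply (measurable_id'.pow_const _) measurableSet_Iic,
    Measure.restrict_apply (measurableSet_Iic.preimage (measurable_id'.pow_const _)), hset,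
    Real.volume_Ioc, sub_zero]

lemma powUniform_prod_le {a b : ℕ} (ha : a ≠ 0) (hb : b ≠ 0) :
    (powUniform a).prod (powUniform b) {p | p.2 ≤ p.1} = ENNReal.ofReal (a / (a + b)) := by
  have hmeas : MeasurableSet {p : ℝ × ℝ | p.2 ≤ p.1} :=
    measurableSet_le measurable_snd measurable_fst
  have hr : (0 : ℝ) ≤ b / a := by positivity
  have hinner : ∀ u ∈ Ioc (0 : ℝ) 1,
      powUniform b (Iic (u ^ (a : ℝ)⁻¹)) = ENNReal.ofReal (u ^ (b / a : ℝ)) := by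
    intro u hu
    rw [powUniform_Iic hb (Real.rpow_nonneg hu.1.le _), ← Real.rpow_mul_natCast hu.1.le,
      inv_mul_eq_div, min_eq_left (Real.rpow_le_one hu.1.le hu.2 hr)]
  -- writing the first factor as the law of `U ^ (1 / a)`, the measure is `∫₀¹ u ^ (b / a) du`
  rw [Measure.prod_apply hmeas, powUniform,
    lintegral_map (measurable_measure_prodMk_left hmeas) (measurable_id'.pow_const _)]
  change ∫⁻ u in Ioc 0 1, powUniform b (Iic (u ^ (a : ℝ)⁻¹)) = _
  rw [setLIntegral_congr_fun measurableSet_Ioc hinner, ← ofReal_integral_eq_lintegral_ofReal,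
    ← intervalIntegral.integral_of_le zero_le_one, integral_rpow (Or.inl (by linarith))]
  · rw [Real.one_rpow, Real.zero_rpow (by positivity)]
    congr 1
    field_simp
    ring
  · exact (intervalIntegral.intervalIntegrable_rpow' (by linarith)).1
  · filter_upwards [ae_restrict_mem measurableSet_Ioc] with u hu
    exact Real.rpow_nonneg hu.1.le _

section
variable {Ω : Type*} [MeasurableSpace Ω] {μ : Measure Ω} [IsProbabilityMeasure μ]

lemma map_eq_powUniform {X : Ω → ℝ} {k : ℕ} (hk : k ≠ 0) (hX : Measurable X)
    (hcdf : ∀ t ∈ Icc (0 : ℝ) 1, μ {ω | X ω ≤ t} = ENNReal.ofReal (t ^ k)) :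
    μ.map X = powUniform k := by
  refine Measure.ext_of_Iic _ _ fun t => ?_
  rw [Measure.map_apply hX measurableSet_Iic]
  change μ {ω | X ω ≤ t} = _
  rcases lt_or_ge t 0 with ht | ht
  · have hX0 : μ {ω | X ω ≤ 0} = 0 := by simpa [hk] using hcdf 0 (by simp)
    have hU0 : powUniform k (Iic 0) = 0 := by simp [powUniform_Iic hk le_rfl, hk]
    rw [measure_mono_null (s := {ω | X ω ≤ t}) (fun ω h => h.trans ht.le) hX0,
      measure_mono_null (Iic_subset_Iic.2 ht.le) hU0]
  rcases le_or_gt t 1 with ht1 | ht1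
  · rw [powUniform_Iic hk ht, min_eq_left (pow_le_one₀ ht ht1)]
    exact hcdf t ⟨ht, ht1⟩
  · rw [powUniform_Iic hk ht, min_eq_right (one_le_pow₀ ht1.le), ENNReal.ofReal_one]
    refine le_antisymm prob_le_one ?_
    calc (1 : ℝ≥0∞) = μ {ω | X ω ≤ 1} := by simpa using (hcdf 1 (by simp)).symm
      _ ≤ μ {ω | X ω ≤ t} := measure_mono fun ω (h : X ω ≤ 1) => h.trans ht1.le

lemma measureReal_lt_of_indepFun {X Y : Ω → ℝ} {a b : ℕ} (ha : a ≠ 0) (hb : b ≠ 0)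
    (hX : Measurable X) (hY : Measurable Y) (hXY : IndepFun X Y μ)
    (hXcdf : ∀ t ∈ Icc (0 : ℝ) 1, μ {ω | X ω ≤ t} = ENNReal.ofReal (t ^ a))
    (hYcdf : ∀ t ∈ Icc (0 : ℝ) 1, μ {ω | Y ω ≤ t} = ENNReal.ofReal (t ^ b)) :
    μ.real {ω | X ω < Y ω} = b / (a + b) := by
  have hle : μ {ω | Y ω ≤ X ω} = ENNReal.ofReal (a / (a + b)) := by
    rw [← powUniform_prod_le ha hb, ← map_eq_powUniform ha hX hXcdf,
      ← map_eq_powUniform hb hY hYcdf,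
      ← (indepFun_iff_map_prod_eq_prod_map_map hX.aemeasurable hY.aemeasurable).1 hXY,
      Measure.map_apply (hX.prodMk hY) (measurableSet_le measurable_snd measurable_fst)]
    rfl
  have hcompl : {ω | X ω < Y ω} = {ω | Y ω ≤ X ω}ᶜ := by ext; simp
  rw [hcompl, probReal_compl_eq_one_sub (measurableSet_le hY hX), measureReal_def, hle,
    ENNReal.toReal_ofReal (by positivity)]
  have : (a : ℝ) + b ≠ 0 := by positivity
  field_simp
  ring

lemma variance_indicator_one_le {s : Set Ω} (hs : MeasurableSet s) :
    variance (s.indicator 1) μ ≤ 1 / 4 := by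
  have h01 : ∀ᵐ ω ∂μ, s.indicator (1 : Ω → ℝ) ω ∈ Icc 0 1 :=
    ae_of_all _ fun ω => by by_cases hω : ω ∈ s <;> simp [hω]
  have := variance_le_sub_mul_sub h01 (measurable_one.indicator hs).aemeasurable
  nlinarith [sq_nonneg (μ[s.indicator (1 : Ω → ℝ)] - 1 / 2)]

end

open Finset Equiv
open scoped Nat

section PairAscents
variable {ι : Type*} {n : ℕ} (a b : ι → Fin n)

noncomputable def pairAscents [Fintype ι] {β : Type*} [LinearOrder β] (x : Fin n → β) : ℝ :=
  ∑ i, if x (a i) < x (b i) then 1 else 0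

lemma pairAscents_congr [Fintype ι] {β γ : Type*} [LinearOrder β] [LinearOrder γ]
    {x : Fin n → β} {y : Fin n → γ} (h : ∀ i j, x i < x j ↔ y i < y j) :
    pairAscents a b x = pairAscents a b y := by
  simp only [pairAscents, h]

lemma ite_lt_sub_half_of_ne {β : Type*} [LinearOrder β] {x y : β} (h : x ≠ y) :
    ((if y < x then 1 else 0) - 1 / 2 : ℝ) = -((if x < y then 1 else 0) - 1 / 2) := by
  rcases h.lt_or_gt with h | h <;> simp [h, h.not_gt] <;> norm_num

variable {a b}

lemma sum_perm_centred_ascent_mul [DecidableEq ι] (hab : Function.Injective (Sum.elim a b))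
    (i j : ι) :
    ∑ τ : Perm (Fin n), ((if τ (a i) < τ (b i) then 1 else 0) - 1 / 2 : ℝ) *
      ((if τ (a j) < τ (b j) then 1 else 0) - 1 / 2) = if i = j then (n ! : ℝ) / 4 else 0 := by
  split_ifs with hij
  · subst hij
    have hsq (τ : Perm (Fin n)) : ((if τ (a i) < τ (b i) then 1 else 0) - 1 / 2 : ℝ) *
        ((if τ (a i) < τ (b i) then 1 else 0) - 1 / 2) = 1 / 4 := by
      split_ifs <;> norm_num
    simp only [hsq, sum_const, card_univ, Fintype.card_perm, Fintype.card_fin, nsmul_eq_mul]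
    ring
  · have hne (x y : ι ⊕ ι) (h : x ≠ y) : Sum.elim a b x ≠ Sum.elim a b y := hab.ne h
    have hai : a i ≠ b i := hne (.inl i) (.inr i) Sum.inl_ne_inr
    have hja : a j ≠ a i := hne (.inl j) (.inl i) (by simpa using Ne.symm hij)
    have hjb : a j ≠ b i := hne (.inl j) (.inr i) Sum.inl_ne_inr
    have hka : b j ≠ a i := hne (.inr j) (.inl i) Sum.inr_ne_inl
    have hkb : b j ≠ b i := hne (.inr j) (.inr i) (by simpa using Ne.symm hij)
    set f : Perm (Fin n) → ℝ := fun τ => ((if τ (a i) < τ (b i) then 1 else 0) - 1 / 2) *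
      ((if τ (a j) < τ (b j) then 1 else 0) - 1 / 2) with hf
    -- composing with the transposition of `a i` and `b i` negates the summand
    have hflip (τ : Perm (Fin n)) : f (τ * swap (a i) (b i)) = -f τ := by
      simp only [hf, Perm.mul_apply, swap_apply_left, swap_apply_right,
        swap_apply_of_ne_of_ne hja hjb, swap_apply_of_ne_of_ne hka hkb,
        ite_lt_sub_half_of_ne (τ.injective.ne hai), neg_mul]
    have := Equiv.sum_comp (Equiv.mulRight (swap (a i) (b i))) f
    simp only [Equiv.coe_mulRight, hflip, sum_neg_distrib] at this
    linarith

lemma sum_perm_pairAscents_sub_sq [Fintype ι] (hab : Function.Injective (Sum.elim a b)) :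
    ∑ τ : Perm (Fin n), (pairAscents a b τ - Fintype.card ι / 2) ^ 2 =
      (n ! : ℝ) * Fintype.card ι / 4 := by
  classical
  have hcentre (τ : Perm (Fin n)) : pairAscents a b τ - Fintype.card ι / 2 =
      ∑ i, ((if τ (a i) < τ (b i) then 1 else 0) - 1 / 2 : ℝ) := by
    simp [pairAscents, sum_sub_distrib, div_eq_mul_inv]
  simp_rw [hcentre, sq, sum_mul_sum]
  rw [sum_comm]
  refine (sum_congr rfl fun i _ => sum_comm).trans ?_
  simp only [sum_perm_centred_ascent_mul hab, sum_ite_eq, Finset.mem_univ, ↓reduceIte, sum_const,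
    card_univ, nsmul_eq_mul]
  ring

lemma card_le_pairAscents_mul_sq_le [Fintype ι] (hab : Function.Injective (Sum.elim a b)) {c : ℝ}
    (hc : 0 ≤ c) :
    #{τ : Perm (Fin n) | Fintype.card ι / 2 + c ≤ pairAscents a b τ} * c ^ 2 ≤
      (n ! : ℝ) * Fintype.card ι / 4 := by
  rw [← sum_perm_pairAscents_sub_sq hab, ← nsmul_eq_mul]
  refine (card_nsmul_le_sum _ _ _ fun τ hτ => ?_).trans
    (sum_le_sum_of_subset_of_nonneg (subset_univ _) fun _ _ _ => sq_nonneg _)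
  have : c ≤ pairAscents a b τ - Fintype.card ι / 2 := by
    linarith [(mem_filter.1 hτ).2]
  exact pow_le_pow_left₀ hc this 2

lemma pairAscents_comp_eq_sum_indicator {Ω : Type*} [Fintype ι]
    (Z : Fin n → Ω → ℝ) :
    (fun ω => pairAscents a b (Z · ω)) = ∑ i, {ω | Z (a i) ω < Z (b i) ω}.indicator 1 := by
  ext ω
  simp [pairAscents, Set.indicator_apply]

end PairAscents

lemma sum_sub_le_half_sum_abs_sub {α : Type*} [Fintype α] {p q : α → ℝ}
    (h : ∑ x, p x = ∑ x, q x) (s : Finset α) :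
    ∑ x ∈ s, (p x - q x) ≤ 1 / 2 * ∑ x, |p x - q x| := by
  classical
  have htotal := sum_add_sum_compl s fun x => p x - q x
  have habs := sum_add_sum_compl s fun x => |p x - q x|
  have hs : ∑ x ∈ s, (p x - q x) ≤ ∑ x ∈ s, |p x - q x| :=
    sum_le_sum fun x _ => le_abs_self _
  have hsc : ∑ x ∈ sᶜ, -(p x - q x) ≤ ∑ x ∈ sᶜ, |p x - q x| :=
    sum_le_sum fun x _ => neg_le_abs _
  have hzero : ∑ x, (p x - q x) = 0 := by rw [sum_sub_distrib, h, sub_self]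
  rw [sum_neg_distrib] at hsc
  linarith

lemma half_sum_abs_sub_le_one_of_sum_eq_one {α : Type*} [Fintype α] {p q : α → ℝ}
    (hp : ∀ x, 0 ≤ p x) (hq : ∀ x, 0 ≤ q x) (hp1 : ∑ x, p x = 1) (hq1 : ∑ x, q x = 1) :
    1 / 2 * ∑ x, |p x - q x| ≤ 1 := by
  have : ∑ x, |p x - q x| ≤ ∑ x, (p x + q x) := sum_le_sum fun x _ =>
    abs_sub_le_iff.2 ⟨by linarith [hq x], by linarith [hp x]⟩
  rw [sum_add_distrib, hp1, hq1] at this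
  linarith

lemma sum_perm_one_div_factorial (n : ℕ) : ∑ _σ : Perm (Fin n), (1 / n ! : ℝ) = 1 := by
  rw [sum_const, card_univ, Fintype.card_perm, Fintype.card_fin, nsmul_eq_mul]
  field_simp

lemma sum_measure_inv_eq {n : ℕ} {Ω : Type*} [MeasurableSpace Ω] (μ : Measure Ω)
    (ρ : Ω → Perm (Fin n)) (f : ℝ → ℝ) :
    ∑ σ, f (μ {ω | (ρ ω)⁻¹ = σ}).toReal = ∑ σ, f (μ.real {ω | ρ ω = σ}) := by
  rw [← Equiv.sum_comp (Equiv.inv (Perm (Fin n)))]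
  simp [inv_inj, measureReal_def]

namespace IsInverseUnfair

variable {n : ℕ} {Ω : Type*} [MeasurableSpace Ω] {μ : Measure Ω} {Z : Fin n → Ω → ℝ}
  {ρ : Ω → Perm (Fin n)}

lemma measureReal_lt (H : IsInverseUnfair μ Z ρ) {i j : Fin n} (hij : i ≠ j) :
    μ.real {ω | Z i ω < Z j ω} = ((j : ℕ) + 1) / ((i : ℕ) + (j : ℕ) + 2) := by
  have := H.prob
  rw [measureReal_lt_of_indepFun (a := i + 1) (b := j + 1) (by omega) (by omega) (H.meas i)
    (H.meas j) (H.indep.indepFun hij) (H.cdf i) (H.cdf j)]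
  push_cast
  ring_nf

lemma measurableSet_setOf_lt (H : IsInverseUnfair μ Z ρ) (i j : Fin n) :
    MeasurableSet {ω | Z i ω < Z j ω} :=
  measurableSet_lt (H.meas i) (H.meas j)

lemma sum_measureReal_eq (H : IsInverseUnfair μ Z ρ) (s : Finset (Perm (Fin n))) :
    ∑ σ ∈ s, μ.real {ω | ρ ω = σ} = μ.real {ω | ρ ω ∈ s} :=
  have := H.prob
  sum_measureReal_preimage_singleton s fun σ _ => H.rhoMeas σ

lemma sum_measureReal_eq_one (H : IsInverseUnfair μ Z ρ) :
    ∑ σ, μ.real {ω | ρ ω = σ} = 1 := by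
  have := H.prob
  simp [H.sum_measureReal_eq]

lemma half_sum_abs_sub_le_one (H : IsInverseUnfair μ Z ρ) :
    1 / 2 * ∑ σ : Perm (Fin n), |(μ {ω | (ρ ω)⁻¹ = σ}).toReal - 1 / (n ! : ℝ)|
      ≤ 1 := by
  rw [sum_measure_inv_eq μ ρ fun x => |x - 1 / (n ! : ℝ)|]
  exact half_sum_abs_sub_le_one_of_sum_eq_one (fun _ => measureReal_nonneg) (fun _ => by positivity)
    H.sum_measureReal_eq_one (sum_perm_one_div_factorial n)

variable {ι : Type*} [Fintype ι] {a b : ι → Fin n}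

lemma ae_pairAscents_eq (H : IsInverseUnfair μ Z ρ) :
    ∀ᵐ ω ∂μ, pairAscents a b (ρ ω) = pairAscents a b (Z · ω) :=
  H.rank.mono fun _ h => pairAscents_congr a b h

lemma memLp_pairAscents (H : IsInverseUnfair μ Z ρ) :
    MemLp (fun ω => pairAscents a b (Z · ω)) 2 μ := by
  have := H.prob
  rw [pairAscents_comp_eq_sum_indicator]
  exact memLp_finsetSum' _ fun i _ =>
    memLp_indicator_const 2 (H.measurableSet_setOf_lt _ _) 1 (Or.inr (measure_ne_top _ _))

lemma integral_pairAscents (H : IsInverseUnfair μ Z ρ)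
    (hab : Function.Injective (Sum.elim a b)) :
    μ[fun ω => pairAscents a b (Z · ω)] =
      ∑ i, ((b i : ℕ) + 1 : ℝ) / ((a i : ℕ) + (b i : ℕ) + 2) := by
  have := H.prob
  rw [pairAscents_comp_eq_sum_indicator, Finset.sum_fn, integral_finsetSum _ fun i _ =>
    (integrable_const 1).indicator (H.measurableSet_setOf_lt _ _)]
  refine sum_congr rfl fun i _ => ?_
  rw [integral_indicator_one (H.measurableSet_setOf_lt _ _)]
  exact H.measureReal_lt (hab.ne Sum.inl_ne_inr)

lemma variance_pairAscents_le (H : IsInverseUnfair μ Z ρ)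
    (hab : Function.Injective (Sum.elim a b)) :
    variance (fun ω => pairAscents a b (Z · ω)) μ ≤ Fintype.card ι / 4 := by
  have := H.prob
  have hne (x y : ι ⊕ ι) (h : x ≠ y) : Sum.elim a b x ≠ Sum.elim a b y := hab.ne h
  rw [pairAscents_comp_eq_sum_indicator, IndepFun.variance_sum
    (X := fun i => {ω | Z (a i) ω < Z (b i) ω}.indicator 1) fun i _ =>
      memLp_indicator_const 2 (H.measurableSet_setOf_lt _ _) 1 (Or.inr (measure_ne_top _ _))]
  · calc ∑ i, variance ({ω | Z (a i) ω < Z (b i) ω}.indicator 1) μ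
        ≤ ∑ _i : ι, (1 / 4 : ℝ) :=
          sum_le_sum fun i _ => variance_indicator_one_le (H.measurableSet_setOf_lt _ _)
      _ = Fintype.card ι / 4 := by simp [div_eq_mul_inv]
  · intro i _ j _ hij
    have hlt : Measurable ({q : ℝ × ℝ | q.1 < q.2}.indicator (1 : ℝ × ℝ → ℝ)) :=
      measurable_one.indicator (measurableSet_lt measurable_fst measurable_snd)
    exact (H.indep.indepFun_prodMk_prodMk H.meas (a i) (b i) (a j) (b j)
      (hne (.inl i) (.inl j) (by simpa using hij)) (hne (.inl i) (.inr j) Sum.inl_ne_inr)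
      (hne (.inr i) (.inl j) Sum.inr_ne_inl) (hne (.inr i) (.inr j) (by simpa using hij))).comp
      hlt hlt

lemma sum_measureReal_pairAscents_lt_le (H : IsInverseUnfair μ Z ρ)
    (hab : Function.Injective (Sum.elim a b)) [Nonempty ι] {δ : ℝ} (hδ : 0 < δ)
    (hp : ∀ i, δ ≤ ((b i : ℕ) + 1 : ℝ) / ((a i : ℕ) + (b i : ℕ) + 2) - 1 / 2) :
    ∑ τ ∈ {τ : Perm (Fin n) |
        pairAscents a b τ < Fintype.card ι / 2 + Fintype.card ι * δ / 2},
      μ.real {ω | ρ ω = τ} ≤ 1 / (Fintype.card ι * δ ^ 2) := by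
  have := H.prob
  set m : ℝ := (Fintype.card ι : ℝ)
  have hm : 0 < m := Nat.cast_pos.2 Fintype.card_pos
  set S : Ω → ℝ := fun ω => pairAscents a b (Z · ω)
  have hmean : m / 2 + m * δ ≤ μ[S] := by
    rw [H.integral_pairAscents hab]
    calc m / 2 + m * δ = ∑ _i : ι, (1 / 2 + δ) := by simp [m]; ring
      _ ≤ _ := sum_le_sum fun i _ => by linarith [hp i]
  have hmδ : 0 < m * δ := by positivity
  have hcheb := meas_ge_le_variance_div_sq (H.memLp_pairAscents (a := a) (b := b))
    (c := m * δ / 2) (by positivity)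
  calc ∑ τ ∈ {τ : Perm (Fin n) | pairAscents a b τ < m / 2 + m * δ / 2},
        μ.real {ω | ρ ω = τ}
      = μ.real {ω | S ω < m / 2 + m * δ / 2} := by
        rw [H.sum_measureReal_eq]
        refine measureReal_congr (eventuallyEq_set.2 ?_)
        filter_upwards [H.ae_pairAscents_eq (a := a) (b := b)] with ω hω
        simp [hω, S]
    _ ≤ μ.real {ω | m * δ / 2 ≤ |S ω - μ[S]|} := by
        refine measureReal_mono fun ω (hω : S ω < _) => ?_
        change _ ≤ |S ω - μ[S]|
        rw [abs_sub_comm, abs_of_nonneg (by linarith)]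
        linarith
    _ ≤ variance S μ / (m * δ / 2) ^ 2 := ENNReal.toReal_le_of_le_ofReal
          (div_nonneg (variance_nonneg _ _) (sq_nonneg _)) hcheb
    _ ≤ (m / 4) / (m * δ / 2) ^ 2 := by
        gcongr
        exact H.variance_pairAscents_le hab
    _ = 1 / (m * δ ^ 2) := by field_simp; ring

theorem one_sub_le_half_sum_abs_sub [Nonempty ι] (H : IsInverseUnfair μ Z ρ)
    (hab : Function.Injective (Sum.elim a b)) {δ : ℝ} (hδ : 0 < δ)
    (hp : ∀ i, δ ≤ ((b i : ℕ) + 1 : ℝ) / ((a i : ℕ) + (b i : ℕ) + 2) - 1 / 2) :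
    1 - 2 / (Fintype.card ι * δ ^ 2) ≤
      1 / 2 * ∑ σ : Perm (Fin n), |(μ {ω | (ρ ω)⁻¹ = σ}).toReal - 1 / (n ! : ℝ)| := by
  have hrand := H.sum_measureReal_pairAscents_lt_le hab hδ hp
  set m : ℝ := (Fintype.card ι : ℝ)
  have hm : 0 < m := Nat.cast_pos.2 Fintype.card_pos
  have hfac : (0 : ℝ) < n ! := by positivity
  set B : Finset (Perm (Fin n)) := {τ : Perm (Fin n) | m / 2 + m * δ / 2 ≤ pairAscents a b τ}
  have hsplit : ∑ τ ∈ B, μ.real {ω | ρ ω = τ} + ∑ τ ∈ {τ : Perm (Fin n) |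
      pairAscents a b τ < m / 2 + m * δ / 2}, μ.real {ω | ρ ω = τ} = 1 := by
    rw [← H.sum_measureReal_eq_one, ← sum_filter_add_sum_filter_not univ
      (fun τ : Perm (Fin n) => m / 2 + m * δ / 2 ≤ pairAscents a b τ),
      filter_congr fun τ _ => not_le]
  have hunif : (#B : ℝ) / n ! ≤ 1 / (m * δ ^ 2) := by
    have := card_le_pairAscents_mul_sq_le hab (c := m * δ / 2) (by positivity)
    rw [div_le_div_iff₀ hfac (by positivity)]
    nlinarith
  have htv := sum_sub_le_half_sum_abs_sub (p := fun τ => μ.real {ω | ρ ω = τ})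
    (q := fun _ => 1 / (n ! : ℝ)) (by rw [H.sum_measureReal_eq_one, sum_perm_one_div_factorial]) B
  rw [sum_sub_distrib, sum_const, nsmul_eq_mul] at htv
  rw [sum_measure_inv_eq μ ρ fun x => |x - 1 / (n ! : ℝ)|]
  have : (#B : ℝ) * (1 / n !) = #B / n ! := by ring
  have htwo : 2 / (m * δ ^ 2) = 1 / (m * δ ^ 2) + 1 / (m * δ ^ 2) := by ring
  linarith

lemma one_sub_le_half_sum_abs_sub_of_two_le (H : IsInverseUnfair μ Z ρ) (hn : 2 ≤ n) :
    1 - 72 / ((n / 2 : ℕ) : ℝ) ≤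
      1 / 2 * ∑ σ : Perm (Fin n), |(μ {ω | (ρ ω)⁻¹ = σ}).toReal - 1 / (n ! : ℝ)| := by
  have : NeZero (n / 2) := ⟨by omega⟩
  have hab : Function.Injective
      (Sum.elim (fun i : Fin (n / 2) => (⟨i, by have := i.isLt; omega⟩ : Fin n))
        fun i : Fin (n / 2) => (⟨i + n / 2, by have := i.isLt; omega⟩ : Fin n)) := by
    rintro (i | i) (j | j) h <;> simp [Fin.ext_iff] at h ⊢ <;> omega
  convert H.one_sub_le_half_sum_abs_sub hab (δ := 1 / 6) (by norm_num) fun i => ?_ using 2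
  · simp only [Fintype.card_fin]
    ring
  · -- `(i + n / 2 + 1) / (2 i + n / 2 + 2) ≥ 2 / 3` as `i < n / 2`; and `2 / (1 / 6) ^ 2 = 72`
    have hi : (i : ℝ) + 1 ≤ (n / 2 : ℕ) := by exact_mod_cast i.isLt
    rw [le_sub_iff_add_le, le_div_iff₀ (by positivity)]
    push_cast
    linarith

end IsInverseUnfair

/-- The total variation distance between the law of the unfair permutation
`γ_n = ρ_n⁻¹` and the uniform distribution on `S_n` converges to `1` as
`n → ∞`.  (Here `d_TV = (1/2) Σ_σ |P(γ_n = σ) - 1/n!|`.) -/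
theorem stmt_8 (Ω : ℕ → Type*) [∀ n, MeasurableSpace (Ω n)]
    (μ : ∀ n, Measure (Ω n)) (Z : ∀ n, Fin n → Ω n → ℝ)
    (ρ : ∀ n, Ω n → Equiv.Perm (Fin n))
    (h : ∀ n, IsInverseUnfair (μ n) (Z n) (ρ n)) :
    Tendsto (fun n => (1 / 2 : ℝ) * ∑ σ : Equiv.Perm (Fin n),
        |(μ n {ω | (ρ n ω)⁻¹ = σ}).toReal - 1 / (Nat.factorial n : ℝ)|)
      atTop (𝓝 1) := by
  have hlower : Tendsto (fun n : ℕ => 1 - 72 / ((n / 2 : ℕ) : ℝ)) atTop (𝓝 1) := by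
    simpa using tendsto_const_nhds.sub (tendsto_const_nhds.div_atTop
      ((tendsto_natCast_atTop_atTop (R := ℝ)).comp (Nat.tendsto_div_const_atTop two_ne_zero)))
  refine tendsto_of_tendsto_of_tendsto_of_le_of_le' hlower tendsto_const_nhds ?_
    (Eventually.of_forall fun n => (h n).half_sum_abs_sub_le_one)
  filter_upwards [eventually_ge_atTop 2] with n hn
  exact (h n).one_sub_le_half_sum_abs_sub_of_two_le hn
end

section
/- For 1 ≤ i and k ≥ 1 with i + k ≤ n, the probability that ρ_n(i) > ρ_n(i+k) equals i/(2i+k). -/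
/-! By the rank property the event is almost surely `{Z_{i+k} < Z_i}`. The variables are
independent and `Z_j` has the power law of density `j t^(j-1)` on `(0,1]` (its cdf is `t^j`), so
the probability is `∫₀¹ t^(i+k) · i t^(i-1) dt = i / (2i+k)`. -/

open MeasureTheory ProbabilityTheory Filter
open scoped ENNReal NNReal Topology

open Set

lemma lintegral_Ioc_ofReal_mul_pow {c : ℝ} (hc : 0 ≤ c) (m : ℕ) {t : ℝ} (ht : 0 ≤ t) :
    ∫⁻ x in Ioc 0 t, ENNReal.ofReal (c * x ^ m) =
      ENNReal.ofReal (c * (t ^ (m + 1) / (m + 1))) := by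
  rw [← ofReal_integral_eq_lintegral_ofReal, ← intervalIntegral.integral_of_le ht,
    intervalIntegral.integral_const_mul, integral_pow]
  · simp
  · exact (continuous_const.mul (continuous_pow m)).integrableOn_Ioc
  · filter_upwards [ae_restrict_mem measurableSet_Ioc] with x hx
    exact mul_nonneg hc (pow_nonneg hx.1.le m)

lemma MeasureTheory.Measure.ext_of_Iic_of_mem_Icc_s12 {ν ν' : Measure ℝ} [IsProbabilityMeasure ν]
    [IsProbabilityMeasure ν'] {a b : ℝ} (ha : ν (Iic a) = 0) (hb : ν (Iic b) = 1)
    (h : ∀ t ∈ Icc a b, ν (Iic t) = ν' (Iic t)) : ν = ν' := by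
  have hab : a ≤ b := by
    by_contra! hba
    have := measure_mono (μ := ν) (Iic_subset_Iic.2 hba.le)
    simp [ha, hb] at this
  refine Measure.ext_of_Iic ν ν' fun t ↦ ?_
  rcases lt_or_ge t a with hta | hat
  · have hle : ∀ ν₀ : Measure ℝ, ν₀ (Iic a) = 0 → ν₀ (Iic t) = 0 :=
      fun ν₀ h₀ ↦ measure_mono_null (Iic_subset_Iic.2 hta.le) h₀
    rw [hle ν ha, hle ν' (h a ⟨le_rfl, hab⟩ ▸ ha)]
  rcases le_or_gt t b with htb | hbt
  · exact h t ⟨hat, htb⟩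
  · have hge : ∀ ν₀ : Measure ℝ, [IsProbabilityMeasure ν₀] →
        ν₀ (Iic b) = 1 → ν₀ (Iic t) = 1 :=
      fun ν₀ _ h₁ ↦ le_antisymm prob_le_one (h₁ ▸ measure_mono (Iic_subset_Iic.2 hbt.le))
    rw [hge ν hb, hge ν' (h b ⟨hab, le_rfl⟩ ▸ hb)]

lemma ProbabilityTheory.IndepFun.measure_lt_eq_lintegral {Ω α : Type*} [MeasurableSpace Ω]
    {μ : Measure Ω} [IsFiniteMeasure μ] [TopologicalSpace α] [MeasurableSpace α]
    [OpensMeasurableSpace α] [LinearOrder α] [OrderClosedTopology α] [SecondCountableTopology α]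
    {X Y : Ω → α}
    (hX : Measurable X) (hY : Measurable Y) (hXY : IndepFun X Y μ) :
    μ {ω | X ω < Y ω} = ∫⁻ y, μ.map X (Iio y) ∂(μ.map Y) := by
  have hlt : MeasurableSet {p : α × α | p.2 < p.1} :=
    measurableSet_lt measurable_snd measurable_fst
  have hprod : μ.map (fun ω ↦ (Y ω, X ω)) = (μ.map Y).prod (μ.map X) :=
    (indepFun_iff_map_prod_eq_prod_map_map hY.aemeasurable hX.aemeasurable).1 hXY.symm
  calc μ {ω | X ω < Y ω} = μ.map (fun ω ↦ (Y ω, X ω)) {p | p.2 < p.1} :=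
        (Measure.map_apply (hY.prodMk hX) hlt).symm
    _ = ∫⁻ y, μ.map X (Iio y) ∂(μ.map Y) := by
        rw [hprod, Measure.prod_apply hlt]
        rfl

noncomputable def powerLaw (c : ℕ) : Measure ℝ :=
  (volume.restrict (Ioc 0 1)).withDensity fun t ↦ ENNReal.ofReal (c * t ^ (c - 1))

lemma powerLaw_apply (c : ℕ) {s : Set ℝ} (hs : MeasurableSet s) :
    powerLaw c s = ∫⁻ t in s ∩ Ioc 0 1, ENNReal.ofReal (c * t ^ (c - 1)) := by
  rw [powerLaw, withDensity_apply _ hs, Measure.restrict_restrict hs]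

lemma powerLaw_Iic {c : ℕ} (hc : 1 ≤ c) {t : ℝ} (ht : t ∈ Icc 0 1) :
    powerLaw c (Iic t) = ENNReal.ofReal (t ^ c) := by
  rw [powerLaw_apply c measurableSet_Iic, Iic_inter_Ioc_of_le ht.2,
    lintegral_Ioc_ofReal_mul_pow (Nat.cast_nonneg c) _ ht.1, Nat.sub_add_cancel hc,
    Nat.cast_sub hc, Nat.cast_one, sub_add_cancel]
  congr 1
  field_simp

instance (c : ℕ) [Fact (1 ≤ c)] : IsProbabilityMeasure (powerLaw c) := by
  constructor
  rw [powerLaw_apply c MeasurableSet.univ, univ_inter, ← Iic_inter_Ioc_of_le le_rfl,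
    ← powerLaw_apply c measurableSet_Iic, powerLaw_Iic Fact.out ⟨zero_le_one, le_rfl⟩,
    one_pow, ENNReal.ofReal_one]

instance (c : ℕ) : NullSingletonClass (powerLaw c) := by
  unfold powerLaw
  infer_instance


lemma lintegral_powerLaw_Iio {a b : ℕ} (ha : 1 ≤ a) (hb : 1 ≤ b) :
    ∫⁻ y, powerLaw a (Iio y) ∂(powerLaw b) = ENNReal.ofReal (b / (a + b)) := by
  have hmono : Monotone fun y ↦ powerLaw a (Iio y) :=
    fun _ _ hxy ↦ measure_mono (Iio_subset_Iio hxy)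
  have hdens : Measurable fun t : ℝ ↦ ENNReal.ofReal (b * t ^ (b - 1)) := by fun_prop
  have hexp : b - 1 + a = a + b - 1 := by omega
  have hexp' : ((a + b - 1 : ℕ) : ℝ) + 1 = a + b := by
    rw [Nat.cast_sub (by omega)]
    push_cast
    ring
  rw [powerLaw, lintegral_withDensity_eq_lintegral_mul _ hdens hmono.measurable]
  calc ∫⁻ y in Ioc 0 1, ENNReal.ofReal (b * y ^ (b - 1)) * powerLaw a (Iio y)
      = ∫⁻ y in Ioc 0 1, ENNReal.ofReal (b * y ^ (a + b - 1)) := by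
        refine setLIntegral_congr_fun measurableSet_Ioc fun y hy ↦ ?_
        rw [measure_congr Iio_ae_eq_Iic, powerLaw_Iic ha (Ioc_subset_Icc_self hy),
          ← ENNReal.ofReal_mul (by have := hy.1.le; positivity), mul_assoc, ← pow_add, hexp]
    _ = ENNReal.ofReal (b / (a + b)) := by
        rw [lintegral_Ioc_ofReal_mul_pow (Nat.cast_nonneg b) _ zero_le_one, one_pow, hexp',
          mul_one_div]

lemma IsInverseUnfair.map_eq_powerLaw {n : ℕ} {Ω : Type*} [MeasurableSpace Ω]
    {μ : Measure Ω} {Z : Fin n → Ω → ℝ} {ρ : Ω → Equiv.Perm (Fin n)}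
    (h : IsInverseUnfair μ Z ρ) (j : Fin n) : μ.map (Z j) = powerLaw (j + 1) := by
  have := h.prob
  have : Fact (1 ≤ (j : ℕ) + 1) := ⟨by omega⟩
  have : IsProbabilityMeasure (μ.map (Z j)) :=
    Measure.isProbabilityMeasure_map (h.meas j).aemeasurable
  have hcdf (t : ℝ) (ht : t ∈ Icc 0 1) :
      μ.map (Z j) (Iic t) = ENNReal.ofReal (t ^ ((j : ℕ) + 1)) := by
    rw [Measure.map_apply (h.meas j) measurableSet_Iic]
    exact h.cdf j t ht
  refine Measure.ext_of_Iic_of_mem_Icc_s12 (a := 0) (b := 1) ?_ ?_ fun t ht ↦ ?_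
  · simp [hcdf 0 ⟨le_rfl, zero_le_one⟩]
  · simp [hcdf 1 ⟨zero_le_one, le_rfl⟩]
  · rw [hcdf t ht, powerLaw_Iic (by omega) ht]

/-- For `1 ≤ i`, `1 ≤ k` with `i + k ≤ n`, the probability that
`ρ_n(i) > ρ_n(i+k)` equals `i / (2i + k)` (players 1-indexed). -/
theorem stmt_12 {n : ℕ} {Ω : Type*} [MeasurableSpace Ω]
    (μ : Measure Ω) (Z : Fin n → Ω → ℝ) (ρ : Ω → Equiv.Perm (Fin n))
    (h : IsInverseUnfair μ Z ρ)
    (i k : ℕ) (hi : 1 ≤ i) (hk : 1 ≤ k) (hik : i + k ≤ n) :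
    μ {ω | ρ ω ⟨i + k - 1, by omega⟩ < ρ ω ⟨i - 1, by omega⟩}
      = ENNReal.ofReal ((i : ℝ) / (2 * (i : ℝ) + (k : ℝ))) := by
  have := h.prob
  set a : Fin n := ⟨i + k - 1, by omega⟩
  set b : Fin n := ⟨i - 1, by omega⟩
  have ha : (a : ℕ) + 1 = i + k := by simp only [a]; omega
  have hb : (b : ℕ) + 1 = i := by simp only [b]; omega
  have hab : a ≠ b := by
    simp only [a, b, ne_eq, Fin.ext_iff]
    omega
  calc μ {ω | ρ ω a < ρ ω b} = μ {ω | Z a ω < Z b ω} :=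
        measure_congr <| by filter_upwards [h.rank] with ω hω using propext (hω a b)
    _ = ∫⁻ y, powerLaw (i + k) (Iio y) ∂(powerLaw i) := by
        rw [(h.indep.indepFun hab).measure_lt_eq_lintegral (h.meas a) (h.meas b),
          h.map_eq_powerLaw, h.map_eq_powerLaw, ha, hb]
    _ = ENNReal.ofReal ((i : ℝ) / (2 * (i : ℝ) + (k : ℝ))) := by
        rw [lintegral_powerLaw_Iio (by omega) hi]
        congr 2
        push_cast
        ring
end
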